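/- arXiv:2105.12604 — 3 statements merged into one kernel-verified Lean document; each statement's English description precedes it below -/
import Mathlib

section
/- Regard ℤ as an additive subgroup of the p-adic integers ℤ_p via the canonical embedding. Then the quotient abelian group ℤ_p/ℤ is uniquely p-divisible, i.e. the multiplication-by-p map on ℤ_p/ℤ is bijective. Concretely: (i) for every y ∈ ℤ_p there exist x ∈ ℤ_p and n ∈ ℤ with p·x = y + n, and (ii) every x ∈ ℤ_p with p·x ∈ ℤ satisfies x ∈ ℤ. -/
lemma padic_aux_div (p : ℕ) [Fact p.Prime] (y : ℤ_[p]) :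
    ∃ (x : ℤ_[p]) (n : ℤ), (p : ℤ_[p]) * x = y + (n : ℤ_[p]) := by
  have h := PadicInt.appr_spec 1 y
  rw [pow_one, Ideal.mem_span_singleton'] at h
  obtain ⟨c, hc⟩ := h
  refine ⟨c, -(y.appr 1 : ℤ), ?_⟩
  rw [mul_comm] at hc
  push_cast
  rw [hc]
  ring

lemma padic_aux_int (p : ℕ) [Fact p.Prime] (x : ℤ_[p])
    (h : ∃ m : ℤ, (p : ℤ_[p]) * x = (m : ℤ_[p])) : ∃ n : ℤ, x = (n : ℤ_[p]) := by
  obtain ⟨m, hm⟩ := h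
  have hp : ((p : ℤ) : ℤ_[p]) ∣ (m : ℤ_[p]) := ⟨x, by push_cast; rw [hm]⟩
  have hnorm : ‖(m : ℤ_[p])‖ < 1 := by
    rw [← hm, norm_mul, PadicInt.norm_p]
    have hp1 : (1 : ℝ) < (p : ℝ) := by
      exact_mod_cast (Fact.out : p.Prime).one_lt
    calc ((p : ℝ))⁻¹ * ‖x‖ ≤ (p : ℝ)⁻¹ * 1 := by
          exact mul_le_mul_of_nonneg_left x.norm_le_one (by positivity)
      _ < 1 := by rw [mul_one]; exact inv_lt_one_of_one_lt₀ hp1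
  have hdvd : (p : ℤ) ∣ m := (PadicInt.norm_int_lt_one_iff_dvd m).mp hnorm
  obtain ⟨k, hk⟩ := hdvd
  refine ⟨k, ?_⟩
  have hpne : (p : ℤ_[p]) ≠ 0 := by
    exact_mod_cast (Fact.out : p.Prime).ne_zero
  apply mul_left_cancel₀ hpne
  rw [hm, hk]; push_cast; ring

theorem padicInt_quotient_int_uniquely_p_divisible (p : ℕ) [Fact p.Prime] :
    Function.Bijective
      (fun x : ℤ_[p] ⧸ (Int.castAddHom ℤ_[p]).range => (p : ℤ) • x) ∧
    (∀ y : ℤ_[p], ∃ (x : ℤ_[p]) (n : ℤ), (p : ℤ_[p]) * x = y + (n : ℤ_[p])) ∧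
    (∀ x : ℤ_[p], (∃ m : ℤ, (p : ℤ_[p]) * x = (m : ℤ_[p])) → ∃ n : ℤ, x = (n : ℤ_[p])) := by
  refine ⟨⟨?_, ?_⟩, padic_aux_div p, padic_aux_int p⟩
  · -- injective
    intro a b h
    induction a using QuotientAddGroup.induction_on with
    | H a =>
    induction b using QuotientAddGroup.induction_on with
    | H b =>
    simp only [← QuotientAddGroup.mk_zsmul] at h
    rw [QuotientAddGroup.eq] at h ⊢
    obtain ⟨m, hm⟩ := h
    simp only [Int.coe_castAddHom] at hm
    have : (p : ℤ_[p]) * (-a + b) = (m : ℤ_[p]) := by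
      rw [hm]
      simp only [zsmul_eq_mul]
      push_cast
      ring
    obtain ⟨n, hn⟩ := padic_aux_int p _ ⟨m, this⟩
    exact ⟨n, by simp [hn]⟩
  · -- surjective
    intro y
    induction y using QuotientAddGroup.induction_on with
    | H y =>
    obtain ⟨x, n, hx⟩ := padic_aux_div p y
    refine ⟨QuotientAddGroup.mk x, ?_⟩
    simp only [← QuotientAddGroup.mk_zsmul]
    rw [QuotientAddGroup.eq]
    exact ⟨-n, by simp [zsmul_eq_mul] at hx ⊢; rw [hx]; ring⟩
end

section
/- Let (x̃_n)_{n≥0} be a sequence in Kˣ such that x̃_{n+1}^p · x̃_n^{-1} ∈ q^ℤ for all n. Then the sequence of classes (x̃_n^{p^n} mod q'^ℤ)_{n≥0} converges in the quotient topological group Kˣ/q'^ℤ. -/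
/-! Modulo `q'^ℤ` the unit `q` is congruent to `ζ = q'⁻¹ q`, whose value is `z`. Writing
`x (j + 1) ^ p = q ^ kⱼ * x j`, the class of `x n ^ p ^ n` is therefore that of the partial
product `x 0 * ∏_{j < n} (ζ ^ p ^ j) ^ kⱼ`. In an ultrametric field
`‖ζ ^ p ^ j - 1‖ ≤ max ‖p‖ ‖z - 1‖ ^ j * ‖z - 1‖`, integer powers of `ζ ^ p ^ j` are no farther
from `1`, and partial products of principal units have norm `1`; so the product is Cauchy in `K`
and converges to a unit. -/

open Filter Topology Finset

lemma IsUltrametricDist.cauchySeq_of_tendsto_dist_succ {X : Type*} [PseudoMetricSpace X]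
    [IsUltrametricDist X] {u : ℕ → X}
    (h : Tendsto (fun n => dist (u n) (u (n + 1))) atTop (𝓝 0)) : CauchySeq u := by
  refine Metric.cauchySeq_iff'.mpr fun ε hε => ?_
  obtain ⟨N, hN⟩ := eventually_atTop.mp (h.eventually (gt_mem_nhds hε))
  refine ⟨N, fun n hn => ?_⟩
  induction n, hn using Nat.le_induction with
  | base => simpa using hε
  | succ n hn ih =>
    calc dist (u (n + 1)) (u N) ≤ max (dist (u (n + 1)) (u n)) (dist (u n) (u N)) :=
          dist_triangle_max _ _ _
      _ < ε := max_lt (by simpa [dist_comm] using hN n hn) ih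

section UltrametricField

variable {K : Type*} [NormedField K] [IsUltrametricDist K]

lemma norm_eq_one_of_norm_sub_one_lt_one {y : K} (hy : ‖y - 1‖ < 1) : ‖y‖ = 1 := by
  simpa [max_eq_right hy.le] using
    IsUltrametricDist.norm_add_eq_max_of_norm_ne_norm (x := y - 1) (y := 1) (by simpa using hy.ne)

lemma norm_pow_sub_one_le {y : K} (hy : ‖y‖ ≤ 1) (n : ℕ) : ‖y ^ n - 1‖ ≤ ‖y - 1‖ := by
  have hsum : ‖∑ i ∈ range n, y ^ i‖ ≤ 1 :=
    IsUltrametricDist.norm_sum_le_of_forall_le_of_nonneg zero_le_one fun i _ => by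
      simpa [norm_pow] using pow_le_one₀ (norm_nonneg y) hy
  rw [← mul_geom_sum, norm_mul]
  exact mul_le_of_le_one_right (norm_nonneg _) hsum

lemma norm_zpow_sub_one_le (u : Kˣ) (hu : ‖(u : K) - 1‖ < 1) (k : ℤ) :
    ‖((u ^ k : Kˣ) : K) - 1‖ ≤ ‖(u : K) - 1‖ := by
  have hu1 : ‖(u : K)‖ = 1 := norm_eq_one_of_norm_sub_one_lt_one hu
  obtain ⟨n, rfl | rfl⟩ := Int.eq_nat_or_neg k
  · simpa using norm_pow_sub_one_le hu1.le n
  · have hn : ‖(u : K) ^ n‖ = 1 := by simp [hu1]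
    have hinv : ((u : K) ^ n)⁻¹ - 1 = ((u : K) ^ n)⁻¹ * -((u : K) ^ n - 1) := by
      field_simp
      ring
    simpa [hinv, hn, norm_sub_rev] using norm_pow_sub_one_le hu1.le n

lemma norm_pow_sub_one_le_max_mul {y : K} (hy : ‖y‖ ≤ 1) (n : ℕ) :
    ‖y ^ n - 1‖ ≤ max ‖(n : K)‖ ‖y - 1‖ * ‖y - 1‖ := by
  -- `y ^ n - 1 = (y - 1) * ∑ y ^ i`, and the sum is `n` up to terms divisible by `y - 1`.
  have hsum : ∑ i ∈ range n, y ^ i = n + ∑ i ∈ range n, (y ^ i - 1) := by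
    simp [sum_sub_distrib]
  have hbound : ‖∑ i ∈ range n, (y ^ i - 1)‖ ≤ ‖y - 1‖ :=
    IsUltrametricDist.norm_sum_le_of_forall_le_of_nonneg (norm_nonneg _) fun i _ =>
      norm_pow_sub_one_le hy i
  rw [← geom_sum_mul, norm_mul, hsum]
  gcongr
  exact (IsUltrametricDist.norm_add_le_max _ _).trans (max_le_max le_rfl hbound)

lemma norm_pow_pow_sub_one_le {y : K} (hy : ‖y‖ ≤ 1) (p n : ℕ) :
    ‖y ^ p ^ n - 1‖ ≤ max ‖(p : K)‖ ‖y - 1‖ ^ n * ‖y - 1‖ := by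
  induction n with
  | zero => simp
  | succ n ih =>
    have hyn : ‖y ^ p ^ n‖ ≤ 1 := by simpa [norm_pow] using pow_le_one₀ (norm_nonneg y) hy
    calc ‖y ^ p ^ (n + 1) - 1‖
        ≤ max ‖(p : K)‖ ‖y ^ p ^ n - 1‖ * ‖y ^ p ^ n - 1‖ := by
          rw [pow_succ, pow_mul]
          exact norm_pow_sub_one_le_max_mul hyn p
      _ ≤ max ‖(p : K)‖ ‖y - 1‖ * (max ‖(p : K)‖ ‖y - 1‖ ^ n * ‖y - 1‖) := by
          gcongr
          exact norm_pow_sub_one_le hy _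
      _ = max ‖(p : K)‖ ‖y - 1‖ ^ (n + 1) * ‖y - 1‖ := by ring

lemma tendsto_norm_pow_pow_sub_one {p : ℕ} (hp : ‖(p : K)‖ < 1) {y : K} (hy : ‖y - 1‖ < 1) :
    Tendsto (fun n => ‖y ^ p ^ n - 1‖) atTop (𝓝 0) := by
  have hc : max ‖(p : K)‖ ‖y - 1‖ < 1 := max_lt hp hy
  refine squeeze_zero (fun n => norm_nonneg _)
    (fun n => norm_pow_pow_sub_one_le (norm_eq_one_of_norm_sub_one_lt_one hy).le p n) ?_
  simpa using (tendsto_pow_atTop_nhds_zero_of_lt_one (by positivity) hc).mul_const ‖y - 1‖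

lemma exists_tendsto_prod_range_of_tendsto_norm_sub_one [CompleteSpace K] {w : ℕ → Kˣ}
    (hw : ∀ n, ‖(w n : K) - 1‖ < 1) (hw0 : Tendsto (fun n => ‖(w n : K) - 1‖) atTop (𝓝 0)) :
    ∃ L : Kˣ, Tendsto (fun n => ∏ j ∈ range n, w j) atTop (𝓝 L) := by
  set P : ℕ → K := fun n => ∏ j ∈ range n, (w j : K)
  have hP : ∀ n, ‖P n‖ = 1 := fun n => by
    simp [P, norm_prod, norm_eq_one_of_norm_sub_one_lt_one (hw _)]
  have hdist : ∀ n, dist (P n) (P (n + 1)) = ‖(w n : K) - 1‖ := fun n => by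
    rw [dist_comm, dist_eq_norm, show P (n + 1) = P n * w n from prod_range_succ _ n,
      ← mul_sub_one, norm_mul, hP, one_mul]
  obtain ⟨t, ht⟩ := cauchySeq_tendsto_of_complete
    (IsUltrametricDist.cauchySeq_of_tendsto_dist_succ (u := P) (by simpa only [hdist] using hw0))
  have ht1 : ‖t‖ = 1 := tendsto_nhds_unique ht.norm (by simp [hP])
  have ht0 : t ≠ 0 := norm_ne_zero_iff.mp (by simp [ht1])
  refine ⟨Units.mk0 t ht0, Units.isEmbedding_val₀.tendsto_nhds_iff.mpr ?_⟩
  simpa [Function.comp_def, P] using ht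

end UltrametricField

lemma QuotientGroup.mk_pow_pow_eq_mk_mul_prod {G : Type*} [CommGroup G] {q' q : G} {p : ℕ}
    {x : ℕ → G} {k : ℕ → ℤ} (hk : ∀ n, q ^ k n = x (n + 1) ^ p * (x n)⁻¹) (n : ℕ) :
    ((x n ^ p ^ n : G) : G ⧸ Subgroup.zpowers q') =
      ↑(x 0 * ∏ j ∈ range n, (q'⁻¹ * q) ^ (k j * p ^ j)) := by
  have hq' : (q' : G ⧸ Subgroup.zpowers q') = 1 :=
    (QuotientGroup.eq_one_iff q').mpr (Subgroup.mem_zpowers q')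
  induction n with
  | zero => simp
  | succ n ih =>
    have hx : x (n + 1) ^ p = q ^ k n * x n := by rw [hk, inv_mul_cancel_right]
    rw [pow_succ', pow_mul, hx, mul_pow, QuotientGroup.mk_mul, ih, prod_range_succ,
      ← zpow_natCast, ← zpow_mul]
    simp only [QuotientGroup.mk_mul, QuotientGroup.mk_zpow, QuotientGroup.mk_inv, hq', inv_one,
      one_mul, Nat.cast_pow]
    ac_rfl

theorem tendsto_pow_prime_pow_mod_zpowers_general (K : Type*) [NormedField K] [CompleteSpace K]
    (hu : ∀ a b : K, ‖a + b‖ ≤ max ‖a‖ ‖b‖)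
    (p : ℕ) (hpK : ‖(p : K)‖ < 1)
    (q' : Kˣ)
    (z : K) (hz : ‖z - 1‖ < 1)
    (q : Kˣ) (hq : (q : K) = (q' : K) * z)
    (x : ℕ → Kˣ)
    (hx : ∀ n : ℕ, x (n + 1) ^ p * (x n)⁻¹ ∈ Subgroup.zpowers q) :
    ∃ L : Kˣ ⧸ Subgroup.zpowers q',
      Filter.Tendsto
        (fun n : ℕ => (QuotientGroup.mk (x n ^ p ^ n) : Kˣ ⧸ Subgroup.zpowers q'))
        Filter.atTop (nhds L) := by
  have : IsUltrametricDist K :=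
    IsUltrametricDist.isUltrametricDist_of_forall_norm_add_le_max_norm hu
  choose k hk using fun n => Subgroup.mem_zpowers_iff.mp (hx n)
  have hζ : ((q'⁻¹ * q : Kˣ) : K) = z := by simp [hq]
  have hzpow : ∀ n, (((q'⁻¹ * q) ^ p ^ n : Kˣ) : K) = z ^ p ^ n := fun n => by
    rw [Units.val_pow_eq_pow_val, hζ]
  have hzn : ∀ n, ‖z ^ p ^ n - 1‖ < 1 := fun n =>
    (norm_pow_sub_one_le (norm_eq_one_of_norm_sub_one_lt_one hz).le _).trans_lt hz
  have hw : ∀ n, ‖(((q'⁻¹ * q) ^ (k n * p ^ n) : Kˣ) : K) - 1‖ ≤ ‖z ^ p ^ n - 1‖ := fun n => by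
    rw [mul_comm (k n), zpow_mul, ← Nat.cast_pow, zpow_natCast, ← hzpow]
    exact norm_zpow_sub_one_le _ (hzpow n ▸ hzn n) (k n)
  obtain ⟨L, hL⟩ := exists_tendsto_prod_range_of_tendsto_norm_sub_one
    (fun n => (hw n).trans_lt (hzn n))
    (squeeze_zero (fun n => norm_nonneg _) hw (tendsto_norm_pow_pow_sub_one hpK hz))
  refine ⟨↑(x 0 * L), ?_⟩
  simp_rw [QuotientGroup.mk_pow_pow_eq_mk_mul_prod hk]
  exact (continuous_quotient_mk'.tendsto _).comp (hL.const_mul (x 0))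

/-- Let `K` be a complete nonarchimedean normed field with `‖p‖ < 1`, let
`q' ∈ Kˣ` with `‖q'‖ < 1`, `z` with `‖z - 1‖ < 1` and `q = q'·z`. If `(x̃ₙ)` is a
sequence of units with `x̃_{n+1}^p · x̃ₙ⁻¹ ∈ q^ℤ` for all `n`, then the classes of
`x̃ₙ^{pⁿ}` converge in the quotient topological group `Kˣ/q'^ℤ`. -/
theorem tendsto_pow_prime_pow_mod_zpowers (K : Type*) [NormedField K] [CompleteSpace K]
    (hu : ∀ a b : K, ‖a + b‖ ≤ max ‖a‖ ‖b‖)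
    (p : ℕ) (hp : p.Prime) (hpK : ‖(p : K)‖ < 1)
    (q' : Kˣ) (hq' : ‖(q' : K)‖ < 1)
    (z : K) (hz : ‖z - 1‖ < 1)
    (q : Kˣ) (hq : (q : K) = (q' : K) * z)
    (x : ℕ → Kˣ)
    (hx : ∀ n : ℕ, x (n + 1) ^ p * (x n)⁻¹ ∈ Subgroup.zpowers q) :
    ∃ L : Kˣ ⧸ Subgroup.zpowers q',
      Filter.Tendsto
        (fun n : ℕ => (QuotientGroup.mk (x n ^ p ^ n) : Kˣ ⧸ Subgroup.zpowers q'))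
        Filter.atTop (nhds L) :=
  tendsto_pow_prime_pow_mod_zpowers_general K hu p hpK q' z hz q hq x hx
end

section
/- Let (x̃_n)_{n≥0} and (x̃'_n)_{n≥0} be two sequences in Kˣ such that x̃_{n+1}^p · x̃_n^{-1} ∈ q^ℤ and x̃'_{n+1}^p · x̃'_n^{-1} ∈ q^ℤ for all n, and such that x̃'_n · x̃_n^{-1} ∈ q^ℤ for all n. Then the two sequences of classes (x̃_n^{p^n} mod q'^ℤ) and (x̃'_n^{p^n} mod q'^ℤ) converge in the quotient topological group Kˣ/q'^ℤ to the same limit. -/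
open Filter Finset

section aux
variable {K : Type*} [NormedField K]

private lemma aux_norm_eq_one (hu : ∀ a b : K, ‖a + b‖ ≤ max ‖a‖ ‖b‖)
    {w : K} (hw : ‖w - 1‖ < 1) : ‖w‖ = 1 := by
  have h1 : ‖w‖ ≤ 1 := by
    have h := hu (w - 1) 1
    have e : w - 1 + 1 = w := by ring
    rw [e, norm_one] at h
    exact h.trans (max_le hw.le le_rfl)
  have h2 : (1:ℝ) ≤ ‖w‖ := by
    have h := hu w (1 - w)
    have e : w + (1 - w) = 1 := by ring
    rw [e, norm_one] at h
    rcases max_cases ‖w‖ ‖1 - w‖ with ⟨he, _⟩ | ⟨he, _⟩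
    · rw [he] at h; exact h
    · rw [he, norm_sub_rev] at h; linarith
  linarith

private lemma aux_pow_sub_one (hu : ∀ a b : K, ‖a + b‖ ≤ max ‖a‖ ‖b‖)
    {w : K} (hw : ‖w - 1‖ < 1) : ∀ n : ℕ, ‖w ^ n - 1‖ ≤ ‖w - 1‖ := by
  intro n
  induction n with
  | zero => simpa using norm_nonneg (w - 1)
  | succ n ih =>
    have e : w ^ (n+1) - 1 = w ^ n * (w - 1) + (w ^ n - 1) := by ring
    rw [e]
    refine (hu _ _).trans (max_le ?_ ih)
    rw [norm_mul, norm_pow, aux_norm_eq_one hu hw, one_pow, one_mul]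

private lemma aux_zpow_sub_one (hu : ∀ a b : K, ‖a + b‖ ≤ max ‖a‖ ‖b‖)
    (u : Kˣ) (h1 : ‖(u:K) - 1‖ < 1) (m : ℤ) :
    ‖((u ^ m : Kˣ) : K) - 1‖ ≤ ‖(u:K) - 1‖ := by
  have hnorm : ∀ n : ℕ, ‖(u:K) ^ n - 1‖ ≤ ‖(u:K) - 1‖ := aux_pow_sub_one hu h1
  rcases m with n | n
  · simpa using hnorm n
  · have hne : (u:K) ^ (n+1) ≠ 0 := pow_ne_zero _ u.ne_zero
    have e1 : ((u ^ (Int.negSucc n) : Kˣ) : K) = ((u:K) ^ (n+1))⁻¹ := by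
      rw [Units.val_zpow_eq_zpow_val, zpow_negSucc]
    rw [e1]
    have e2 : ((u:K) ^ (n+1))⁻¹ - 1 = ((u:K) ^ (n+1))⁻¹ * (1 - (u:K)^(n+1)) := by
      field_simp
    rw [e2, norm_mul, norm_inv, norm_pow, aux_norm_eq_one hu h1, one_pow, inv_one, one_mul,
      norm_sub_rev]
    exact hnorm (n+1)

private lemma aux_sum (hu : ∀ a b : K, ‖a + b‖ ≤ max ‖a‖ ‖b‖)
    {B : ℝ} (hB : 0 ≤ B) (f : ℕ → K) :
    ∀ n : ℕ, (∀ i, i < n → ‖f i‖ ≤ B) → ‖∑ i ∈ range n, f i‖ ≤ B := by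
  intro n
  induction n with
  | zero => intro _; simpa using hB
  | succ n ih =>
    intro h
    rw [Finset.sum_range_succ]
    exact (hu _ _).trans (max_le (ih fun i hi => h i (hi.trans (Nat.lt_succ_self n)))
      (h n (Nat.lt_succ_self n)))

private lemma aux_pow_p (hu : ∀ a b : K, ‖a + b‖ ≤ max ‖a‖ ‖b‖)
    {w : K} (hw : ‖w - 1‖ < 1) (p : ℕ) :
    ‖w ^ p - 1‖ ≤ max ‖(p:K)‖ ‖w - 1‖ * ‖w - 1‖ := by
  have hg : (∑ i ∈ range p, w ^ i) * (w - 1) = w ^ p - 1 := geom_sum_mul w p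
  have hsplit : (∑ i ∈ range p, (w ^ i - 1)) + (p:K) = ∑ i ∈ range p, w ^ i := by
    rw [Finset.sum_sub_distrib, Finset.sum_const, Finset.card_range, nsmul_eq_mul, mul_one]
    ring
  have hsum : ‖∑ i ∈ range p, w ^ i‖ ≤ max ‖(p:K)‖ ‖w - 1‖ := by
    rw [← hsplit]
    refine (hu _ _).trans (max_le ?_ (le_max_left _ _))
    exact le_trans (aux_sum hu (norm_nonneg _) _ p (fun i _ => aux_pow_sub_one hu hw i))
      (le_max_right _ _)
  rw [← hg, norm_mul]
  exact mul_le_mul_of_nonneg_right hsum (norm_nonneg _)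

private lemma aux_pow_pn (hu : ∀ a b : K, ‖a + b‖ ≤ max ‖a‖ ‖b‖)
    {w : K} (hw : ‖w - 1‖ < 1) (p : ℕ) (hpK : ‖(p:K)‖ < 1) :
    ∀ n : ℕ, ‖w ^ p ^ n - 1‖ ≤ (max ‖(p:K)‖ ‖w - 1‖) ^ n * ‖w - 1‖ := by
  set c := max ‖(p:K)‖ ‖w - 1‖ with hc
  have hc1 : c < 1 := max_lt hpK hw
  have hc0 : 0 ≤ c := le_max_of_le_left (norm_nonneg _)
  intro n
  induction n with
  | zero => simp
  | succ n ih =>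
    have hle1 : (c:ℝ) ^ n * ‖w - 1‖ ≤ ‖w - 1‖ :=
      mul_le_of_le_one_left (norm_nonneg _) (pow_le_one₀ hc0 hc1.le)
    have hlt : ‖w ^ p ^ n - 1‖ < 1 := lt_of_le_of_lt (ih.trans hle1) hw
    have step := aux_pow_p hu hlt p
    have e : (w ^ p ^ n) ^ p = w ^ p ^ (n+1) := by rw [← pow_mul, pow_succ]
    rw [e] at step
    refine step.trans ?_
    have h1 : max ‖(p:K)‖ ‖w ^ p ^ n - 1‖ ≤ c :=
      max_le (le_max_left _ _) (le_trans (ih.trans hle1) (le_max_right _ _))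
    calc max ‖(p:K)‖ ‖w ^ p ^ n - 1‖ * ‖w ^ p ^ n - 1‖
        ≤ c * (c ^ n * ‖w - 1‖) := mul_le_mul h1 ih (norm_nonneg _) hc0
      _ = c ^ (n+1) * ‖w - 1‖ := by ring

private lemma aux_zpow_pn (hu : ∀ a b : K, ‖a + b‖ ≤ max ‖a‖ ‖b‖)
    {w : Kˣ} (hw : ‖(w:K) - 1‖ < 1) (p : ℕ) (hpK : ‖(p:K)‖ < 1)
    (n : ℕ) (m : ℤ) :
    ‖((w ^ (m * (p:ℤ) ^ n) : Kˣ) : K) - 1‖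
      ≤ (max ‖(p:K)‖ ‖(w:K) - 1‖) ^ n * ‖(w:K) - 1‖ := by
  set c := max ‖(p:K)‖ ‖(w:K) - 1‖ with hc
  have hc1 : c < 1 := max_lt hpK hw
  have hc0 : 0 ≤ c := le_max_of_le_left (norm_nonneg _)
  have hpn : ‖((w ^ (p ^ n : ℕ) : Kˣ) : K) - 1‖ ≤ c ^ n * ‖(w:K) - 1‖ := by
    rw [Units.val_pow_eq_pow_val]
    exact aux_pow_pn hu hw p hpK n
  have hlt : ‖((w ^ (p ^ n : ℕ) : Kˣ) : K) - 1‖ < 1 := by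
    refine lt_of_le_of_lt (hpn.trans ?_) hw
    exact mul_le_of_le_one_left (norm_nonneg _) (pow_le_one₀ hc0 hc1.le)
  have e : w ^ (m * (p:ℤ) ^ n) = (w ^ (p ^ n : ℕ)) ^ m := by
    rw [mul_comm, zpow_mul]
    norm_cast
  rw [e]
  exact (aux_zpow_sub_one hu _ hlt m).trans hpn

end aux

/-- In the setting of the Tate curve computation: if `(x̃ₙ)` and `(x̃'ₙ)` are two
sequences of units with `x̃_{n+1}^p · x̃ₙ⁻¹ ∈ q^ℤ`, `x̃'_{n+1}^p · x̃'ₙ⁻¹ ∈ q^ℤ` and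
`x̃'ₙ · x̃ₙ⁻¹ ∈ q^ℤ` for all `n`, then the classes of `x̃ₙ^{pⁿ}` and of `x̃'ₙ^{pⁿ}`
converge in `Kˣ/q'^ℤ` to the same limit. -/
theorem tendsto_pow_prime_pow_mod_zpowers_lift_independent
    (K : Type*) [NormedField K] [CompleteSpace K]
    (hu : ∀ a b : K, ‖a + b‖ ≤ max ‖a‖ ‖b‖)
    (p : ℕ) (hp : p.Prime) (hpK : ‖(p : K)‖ < 1)
    (q' : Kˣ) (hq' : ‖(q' : K)‖ < 1)
    (z : K) (hz : ‖z - 1‖ < 1)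
    (q : Kˣ) (hq : (q : K) = (q' : K) * z)
    (x x' : ℕ → Kˣ)
    (hx : ∀ n : ℕ, x (n + 1) ^ p * (x n)⁻¹ ∈ Subgroup.zpowers q)
    (hx' : ∀ n : ℕ, x' (n + 1) ^ p * (x' n)⁻¹ ∈ Subgroup.zpowers q)
    (hxx' : ∀ n : ℕ, x' n * (x n)⁻¹ ∈ Subgroup.zpowers q) :
    ∃ L : Kˣ ⧸ Subgroup.zpowers q',
      Filter.Tendsto
        (fun n : ℕ => (QuotientGroup.mk (x n ^ p ^ n) : Kˣ ⧸ Subgroup.zpowers q'))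
        Filter.atTop (nhds L) ∧
      Filter.Tendsto
        (fun n : ℕ => (QuotientGroup.mk (x' n ^ p ^ n) : Kˣ ⧸ Subgroup.zpowers q'))
        Filter.atTop (nhds L) := by
  classical
  -- the unit `zu` with value `z`
  set zu : Kˣ := q'⁻¹ * q with hzu
  have hzuval : (zu : K) = z := by
    rw [hzu, Units.val_mul, hq, Units.val_inv_eq_inv_val, inv_mul_cancel_left₀ q'.ne_zero]
  have hq_eq : q = q' * zu := by rw [hzu, mul_inv_cancel_left]
  have hzw : ‖(zu:K) - 1‖ < 1 := by rw [hzuval]; exact hz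
  -- exponents
  choose k hk using fun n => Subgroup.mem_zpowers_iff.mp (hx n)
  choose j hj using fun n => Subgroup.mem_zpowers_iff.mp (hxx' n)
  set S : ℕ → ℤ := fun n => ∑ i ∈ range n, k i * (p:ℤ) ^ i with hSdef
  have hzpow_pow : ∀ (g : Kˣ) (a : ℤ) (b : ℕ), (g ^ a) ^ b = g ^ (a * (b:ℤ)) := by
    intro g a b
    rw [zpow_mul, zpow_natCast]
  have hx1 : ∀ n, x (n+1) ^ p = x n * q ^ k n := by
    intro n
    rw [hk n, mul_comm (x (n+1) ^ p) (x n)⁻¹, mul_inv_cancel_left]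
  have hx'1 : ∀ n, x' n = x n * q ^ j n := by
    intro n
    rw [hj n, mul_comm (x' n) (x n)⁻¹, mul_inv_cancel_left]
  have hS : ∀ n, x n ^ p ^ n = x 0 * q ^ S n := by
    intro n
    induction n with
    | zero => simp [hSdef]
    | succ n ih =>
      calc x (n+1) ^ p ^ (n+1) = (x (n+1) ^ p) ^ p ^ n := by rw [← pow_mul, ← pow_succ']
        _ = (x n * q ^ k n) ^ p ^ n := by rw [hx1 n]
        _ = x n ^ p ^ n * (q ^ k n) ^ (p ^ n : ℕ) := mul_pow _ _ _
        _ = x 0 * q ^ S n * q ^ (k n * (p:ℤ) ^ n) := by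
            rw [ih, hzpow_pow]; push_cast; ring_nf
        _ = x 0 * q ^ S (n+1) := by
            rw [mul_assoc, ← zpow_add]
            congr 2
            simp [hSdef, Finset.sum_range_succ]
  have hS' : ∀ n, x' n ^ p ^ n = x 0 * q ^ (S n + j n * (p:ℤ) ^ n) := by
    intro n
    calc x' n ^ p ^ n = (x n * q ^ j n) ^ p ^ n := by rw [hx'1 n]
      _ = x n ^ p ^ n * (q ^ j n) ^ (p ^ n : ℕ) := mul_pow _ _ _
      _ = x 0 * q ^ S n * q ^ (j n * (p:ℤ) ^ n) := by
          rw [hS n, hzpow_pow]; push_cast; ring_nf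
      _ = x 0 * q ^ (S n + j n * (p:ℤ) ^ n) := by rw [mul_assoc, ← zpow_add]
  -- passing to the quotient, `q` can be replaced by `zu`
  have hmk : ∀ m : ℤ, (QuotientGroup.mk (x 0 * q ^ m) : Kˣ ⧸ Subgroup.zpowers q')
      = QuotientGroup.mk (x 0 * zu ^ m) := by
    intro m
    have e : x 0 * q ^ m = (x 0 * zu ^ m) * q' ^ m := by
      rw [hq_eq, mul_zpow, mul_comm ((q':Kˣ) ^ m) (zu ^ m), ← mul_assoc]
    rw [e, QuotientGroup.mk_mul_of_mem _ (Subgroup.mem_zpowers_iff.mpr ⟨m, rfl⟩)]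
  -- analysis of the sequence zu ^ S n
  set c := max ‖(p:K)‖ ‖(zu:K) - 1‖ with hcdef
  have hc1 : c < 1 := max_lt hpK hzw
  have hc0 : 0 ≤ c := le_max_of_le_left (norm_nonneg _)
  set a : ℕ → K := fun n => ((zu ^ S n : Kˣ) : K) with hadef
  have hanorm1 : ∀ n, ‖a n - 1‖ ≤ ‖(zu:K) - 1‖ := fun n => aux_zpow_sub_one hu zu hzw (S n)
  have hdiff : ∀ (n : ℕ) (m : ℤ),
      ‖((zu ^ (S n + m * (p:ℤ) ^ n) : Kˣ) : K) - a n‖ ≤ c ^ n * ‖(zu:K) - 1‖ := by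
    intro n m
    have e0 : (zu ^ (S n + m * (p:ℤ) ^ n) : Kˣ) = zu ^ S n * zu ^ (m * (p:ℤ) ^ n) :=
      zpow_add zu _ _
    have e : ((zu ^ (S n + m * (p:ℤ) ^ n) : Kˣ) : K) - a n
        = a n * (((zu ^ (m * (p:ℤ) ^ n) : Kˣ) : K) - 1) := by
      rw [e0, Units.val_mul]; ring
    rw [e, norm_mul, aux_norm_eq_one hu (lt_of_le_of_lt (hanorm1 n) hzw), one_mul]
    exact aux_zpow_pn hu hzw p hpK n m
  have hcauchy : CauchySeq a := by
    refine cauchySeq_of_le_geometric c ‖(zu:K) - 1‖ hc1 (fun n => ?_)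
    rw [dist_eq_norm, norm_sub_rev]
    have e : S (n+1) = S n + k n * (p:ℤ) ^ n := by
      simp [hSdef, Finset.sum_range_succ]
    calc ‖a (n+1) - a n‖ = ‖((zu ^ (S n + k n * (p:ℤ) ^ n) : Kˣ) : K) - a n‖ := by
          rw [hadef]; simp only []; rw [e]
      _ ≤ c ^ n * ‖(zu:K) - 1‖ := hdiff n (k n)
      _ = ‖(zu:K) - 1‖ * c ^ n := by ring
  obtain ⟨t, htlim⟩ := cauchySeq_tendsto_of_complete hcauchy
  have htn : ‖t - 1‖ ≤ ‖(zu:K) - 1‖ :=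
    le_of_tendsto ((htlim.sub tendsto_const_nhds).norm) (Filter.Eventually.of_forall hanorm1)
  have ht1 : ‖t - 1‖ < 1 := lt_of_le_of_lt htn hzw
  have ht0 : t ≠ 0 := by
    intro h
    rw [h] at ht1
    simp at ht1
  set tu : Kˣ := Units.mk0 t ht0 with htudef
  have hval : Filter.Tendsto (fun n => (zu ^ S n : Kˣ)) atTop (nhds tu) := by
    rw [Units.isEmbedding_val₀.tendsto_nhds_iff]
    exact htlim
  have hval' : Filter.Tendsto (fun n => (zu ^ (S n + j n * (p:ℤ) ^ n) : Kˣ)) atTop (nhds tu) := by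
    rw [Units.isEmbedding_val₀.tendsto_nhds_iff]
    have h0 : Filter.Tendsto
        (fun n => ((zu ^ (S n + j n * (p:ℤ) ^ n) : Kˣ) : K) - a n) atTop (nhds 0) :=
      squeeze_zero_norm (fun n => hdiff n (j n))
        (by simpa using (tendsto_pow_atTop_nhds_zero_of_lt_one hc0 hc1).mul_const ‖(zu:K) - 1‖)
    have := htlim.add h0
    rw [add_zero] at this
    refine this.congr (fun n => ?_)
    show a n + (((zu ^ (S n + j n * (p:ℤ) ^ n) : Kˣ) : K) - a n)
        = ((zu ^ (S n + j n * (p:ℤ) ^ n) : Kˣ) : K)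
    ring
  have hmk_cont : Continuous (QuotientGroup.mk : Kˣ → Kˣ ⧸ Subgroup.zpowers q') :=
    continuous_quotient_mk'
  refine ⟨QuotientGroup.mk (x 0 * tu), ?_, ?_⟩
  · have h := (hmk_cont.tendsto _).comp
      ((tendsto_const_nhds : Filter.Tendsto (fun _ : ℕ => x 0) atTop (nhds (x 0))).mul hval)
    refine h.congr (fun n => ?_)
    show QuotientGroup.mk (x 0 * zu ^ S n) = _
    rw [hS n, hmk (S n)]
  · have h := (hmk_cont.tendsto _).comp
      ((tendsto_const_nhds : Filter.Tendsto (fun _ : ℕ => x 0) atTop (nhds (x 0))).mul hval')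
    refine h.congr (fun n => ?_)
    show QuotientGroup.mk (x 0 * zu ^ (S n + j n * (p:ℤ) ^ n)) = _
    rw [hS' n, hmk (S n + j n * (p:ℤ) ^ n)]
end
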